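/- Let λ_min > 0 be the smallest eigenvalue of the positive definite matrix C = XᵀX, and let β ∈ ℝᵖ with β ≠ 0. Define f(k) = k²·βᵀ(C + kI)⁻²β + σ²·Σⱼ λⱼ/(λⱼ + k)². Then f is differentiable at 0 with f'(0) = −2σ²·Σⱼ 1/λⱼ² < 0; hence there exists k > 0 with f(k) < f(0). -/

import Mathlib

open Matrix Filter Topology

/-!
Near `k = 0` the bias term `k² βᵀ(C + kI)⁻²β` is `k²` times a function continuous at `0`, so it
contributes nothing to `f'(0)`; the variance term `σ² Σⱼ λⱼ/(λⱼ + k)²` has derivative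
`-2σ² Σⱼ 1/λⱼ² < 0` at `0`. A function with negative right derivative decreases to the right.
-/

theorem HasDerivAt.exists_gt_lt_of_neg {f : ℝ → ℝ} {f' x : ℝ} (hf : HasDerivAt f f' x)
    (hf' : f' < 0) : ∃ y > x, f y < f x := by
  have hslope : ∀ᶠ y in 𝓝[>] x, slope f x y < 0 :=
    hf.hasDerivWithinAt.limsup_slope_le' (lt_irrefl x) hf'
  obtain ⟨y, hy, hxy⟩ := (hslope.and self_mem_nhdsWithin).exists
  exact ⟨y, hxy, (slope_neg_iff_of_le hxy.le).mp hy⟩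

theorem hasDerivAt_sq_smul_of_continuousAt {𝕜 F : Type*} [NontriviallyNormedField 𝕜]
    [NormedAddCommGroup F] [NormedSpace 𝕜 F] {q : 𝕜 → F} (hq : ContinuousAt q 0) :
    HasDerivAt (fun k => k ^ 2 • q k) 0 0 := by
  rw [hasDerivAt_iff_tendsto_slope_zero]
  have hlim : Tendsto (fun t : 𝕜 => t • q t) (𝓝[≠] 0) (𝓝 0) := by
    simpa using (continuousAt_id.fun_smul hq).tendsto.mono_left nhdsWithin_le_nhds
  refine hlim.congr' ?_
  filter_upwards [self_mem_nhdsWithin] with t (ht : t ≠ 0)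
  simp [smul_smul, pow_two, ht]

theorem Matrix.continuousAt_inv_of_det_ne_zero {n 𝕜 : Type*} [Fintype n] [DecidableEq n]
    [Field 𝕜] [TopologicalSpace 𝕜] [IsTopologicalDivisionRing 𝕜]
    {A : Matrix n n 𝕜} (hA : A.det ≠ 0) : ContinuousAt Inv.inv A :=
  continuousAt_matrix_inv A (Ring.inverse_eq_inv' (G₀ := 𝕜) ▸ continuousAt_inv₀ hA)

theorem hasDerivAt_div_add_sq {𝕜 : Type*} [NontriviallyNormedField 𝕜] (l x : 𝕜)
    (h : l + x ≠ 0) : HasDerivAt (fun k => l / (l + k) ^ 2) (-2 * l / (l + x) ^ 3) x := by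
  have hsq : HasDerivAt (fun k => (l + k) ^ 2) (2 * (l + x)) x := by
    simpa using ((hasDerivAt_id x).const_add l).fun_pow 2
  refine ((hasDerivAt_const x l).fun_div hsq (pow_ne_zero 2 h)).congr_deriv ?_
  field

theorem hoerl_kennard_existence_general (p : ℕ)
    (C : Matrix (Fin p) (Fin p) ℝ) (hC : C.PosDef)
    (β : Fin p → ℝ) (σ2 : ℝ) (hσ : 0 < σ2)
    (f : ℝ → ℝ)
    (hf : f = fun k =>
      k^2 * (β ⬝ᵥ (((C + k • (1 : Matrix (Fin p) (Fin p) ℝ))⁻¹ *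
        (C + k • (1 : Matrix (Fin p) (Fin p) ℝ))⁻¹) *ᵥ β))
      + σ2 * ∑ j, hC.1.eigenvalues j / (hC.1.eigenvalues j + k)^2) :
    HasDerivAt f (-2 * σ2 * ∑ j, 1 / (hC.1.eigenvalues j)^2) 0 ∧
    (p ≠ 0 → -2 * σ2 * ∑ j, 1 / (hC.1.eigenvalues j)^2 < 0) ∧
    (p ≠ 0 → ∃ k > 0, f k < f 0) := by
  set ev := hC.1.eigenvalues
  have hev : ∀ j, 0 < ev j := hC.eigenvalues_pos
  have hresolvent : ContinuousAt (fun k : ℝ => (C + k • (1 : Matrix (Fin p) (Fin p) ℝ))⁻¹) 0 := by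
    have hdet : (C + (0 : ℝ) • (1 : Matrix (Fin p) (Fin p) ℝ)).det ≠ 0 := by
      simpa using hC.det_pos.ne'
    exact (continuousAt_inv_of_det_ne_zero hdet).comp (f := fun k : ℝ => C + k • 1) (by fun_prop)
  have hbias := hasDerivAt_sq_smul_of_continuousAt
    (by fun_prop :
      ContinuousAt (fun k : ℝ => β ⬝ᵥ (((C + k • (1 : Matrix (Fin p) (Fin p) ℝ))⁻¹ *
        (C + k • (1 : Matrix (Fin p) (Fin p) ℝ))⁻¹) *ᵥ β)) 0)
  have hvariance : HasDerivAt (fun k => σ2 * ∑ j, ev j / (ev j + k) ^ 2)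
      (σ2 * ∑ j, -2 * ev j / (ev j + 0) ^ 3) 0 :=
    (HasDerivAt.fun_sum fun j _ =>
      hasDerivAt_div_add_sq _ _ (by simpa using (hev j).ne')).const_mul σ2
  have hderiv : HasDerivAt f (-2 * σ2 * ∑ j, 1 / ev j ^ 2) 0 := by
    rw [hf]
    refine (hbias.add hvariance).congr_deriv ?_
    simp only [zero_add, add_zero, Finset.mul_sum]
    refine Finset.sum_congr rfl fun j _ => ?_
    have := (hev j).ne'
    field
  have hneg : p ≠ 0 → -2 * σ2 * ∑ j, 1 / ev j ^ 2 < 0 := fun hp => by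
    have : Nonempty (Fin p) := ⟨⟨0, Nat.pos_of_ne_zero hp⟩⟩
    have hsum : 0 < ∑ j, 1 / ev j ^ 2 :=
      Finset.sum_pos (fun j _ => by have := hev j; positivity) Finset.univ_nonempty
    nlinarith
  exact ⟨hderiv, hneg, fun hp => hderiv.exists_gt_lt_of_neg (hneg hp)⟩

theorem hoerl_kennard_existence (p : ℕ)
    (C : Matrix (Fin p) (Fin p) ℝ) (hC : C.PosDef)
    (β : Fin p → ℝ) (hβ : β ≠ 0) (σ2 : ℝ) (hσ : 0 < σ2)
    (f : ℝ → ℝ)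
    (hf : f = fun k =>
      k^2 * (β ⬝ᵥ (((C + k • (1 : Matrix (Fin p) (Fin p) ℝ))⁻¹ *
        (C + k • (1 : Matrix (Fin p) (Fin p) ℝ))⁻¹) *ᵥ β))
      + σ2 * ∑ j, hC.1.eigenvalues j / (hC.1.eigenvalues j + k)^2) :
    HasDerivAt f (-2 * σ2 * ∑ j, 1 / (hC.1.eigenvalues j)^2) 0 ∧
    (p ≠ 0 → -2 * σ2 * ∑ j, 1 / (hC.1.eigenvalues j)^2 < 0) ∧
    (p ≠ 0 → ∃ k > 0, f k < f 0) :=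
  hoerl_kennard_existence_general p C hC β σ2 hσ f hf
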